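/- Assume event 𝒜: every canonical hop-limited shortest path in G with at least √n hops contains an internal sampled vertex. Let G' be the skeleton graph on sampled vertex set V' where (u',v') ∈ E' iff there is a u'–v' path in G with at most √n hops, weighted by the √n-limited distance d_G^{(√n)}(u',v'). Then for every v' ∈ V' and every u' in the set S'^{(√n·k)}_G[k](v') of k closest sampled vertices to v' with respect to (√n·k)-limited distance in G, there exists a u'–v' path in G' with at most k edges and weight exactly d_G^{(√n k)}(u',v'). -/

import Mathlib

open scoped ENNReal

namespace Stmt6

variable {V : Type*}

/-- Endpoint of a walk starting at `u` with subsequent vertices given by the list. -/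
def last : V → List V → V
  | u, [] => u
  | _, x :: xs => last x xs

/-- Weight of a walk starting at `u` with subsequent vertices given by the list. -/
noncomputable def cost (w : V → V → ℝ≥0∞) : V → List V → ℝ≥0∞
  | _, [] => 0
  | u, x :: xs => w u x + cost w x xs

/-- `h`-hop-limited distance from `u` to `v` (non-edges have weight `⊤`). -/
noncomputable def hdist (w : V → V → ℝ≥0∞) (h : ℕ) (u v : V) : ℝ≥0∞ :=
  ⨅ p ∈ {p : List V | p.length ≤ h ∧ last u p = v}, cost w u p

/-- Shortest-path distance from `u` to `v`. -/
noncomputable def dist (w : V → V → ℝ≥0∞) (u v : V) : ℝ≥0∞ :=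
  ⨅ h : ℕ, hdist w h u v

/-- `S` is a set of (at most) `k` closest reachable vertices to `v` (excluding `v`),
with ties broken arbitrarily: members of `S` are reachable and distinct from `v`,
`|S| ≤ k`, every member is at least as close as every reachable non-member, and `S`
has exactly `k` elements unless it already contains all reachable vertices. -/
def IsKClosest [Fintype V] (w : V → V → ℝ≥0∞) (k : ℕ) (v : V) (S : Finset V) : Prop :=
  (∀ u ∈ S, u ≠ v ∧ dist w v u < ⊤) ∧ S.card ≤ k ∧
  (∀ y ∈ S, ∀ z, z ∉ S → z ≠ v → dist w v z < ⊤ → dist w v y ≤ dist w v z) ∧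
  (∀ z, z ∉ S → z ≠ v → dist w v z < ⊤ → S.card = k)

/-- Weight function of the union `G ∪ G^(k)` of the graph with the `k`-shortcut hopset:
hopset edges `(u,v)` (present when `u ∈ S v` or `v ∈ S u`) get weight `d_G(u,v)`. -/
noncomputable def unionW [Fintype V] [DecidableEq V] (w : V → V → ℝ≥0∞) (S : V → Finset V)
    (u v : V) : ℝ≥0∞ :=
  if u ∈ S v ∨ v ∈ S u then min (w u v) (dist w u v) else w u v


/-- `p` is the canonical `i`-hop-limited shortest `u`–`v` path: it has at most `i`
edges, ends at `v`, has minimum weight (equal to the `i`-limited distance), and among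
such paths it has the fewest edges and is lexicographically smallest with respect to
the vertex identifiers `ids` (comparing vertex sequences from the tail `u`). -/
def CanonicalPath (w : V → V → ℝ≥0∞) (ids : V → ℕ) (i : ℕ) (u v : V) (p : List V) : Prop :=
  p.length ≤ i ∧ last u p = v ∧ cost w u p = hdist w i u v ∧
  ∀ q : List V, q.length ≤ i → last u q = v → cost w u q = hdist w i u v →
    p.length ≤ q.length ∧
    (p.length = q.length → ¬ List.Lex (· < ·) ((u :: q).map ids) ((u :: p).map ids))

/-- Weight function of the skeleton graph `G'` on the sampled set `V'`: an edge
between two sampled vertices has weight equal to the `s`-hop-limited distance in `G`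
(`⊤`, i.e. no edge, if they are not connected by an `s`-hop-limited path). -/
noncomputable def skelW [DecidableEq V] (w : V → V → ℝ≥0∞) (V' : Finset V) (s : ℕ)
    (u v : V) : ℝ≥0∞ :=
  if u ∈ V' ∧ v ∈ V' then hdist w s u v else ⊤

/-- Minimum number of hops of an `i`-hop-limited minimum-weight `u`–`v` path. -/
noncomputable def minHops (w : V → V → ℝ≥0∞) (i : ℕ) (u v : V) : ℕ :=
  sInf {ℓ : ℕ | ∃ p : List V, p.length = ℓ ∧ ℓ ≤ i ∧ last u p = v ∧ cost w u p = hdist w i u v}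

/-- Strict comparison of vertices by distance, with ties broken by the tie-breaking
key `tie` (lexicographically). -/
def keyLt (d : V → ℝ≥0∞) (tie : V → ℕ × ℕ) (y z : V) : Prop :=
  Prod.Lex (· < ·) (Prod.Lex (· < ·) (· < ·)) (d y, tie y) (d z, tie z)

/-- `S` is the set of the `k` closest vertices of `dom` to `v` (excluding `v`) with
respect to the distance function `d`, with ties broken by the key `tie`: members are
reachable, `|S| ≤ k`, every member strictly precedes every reachable non-member, and
`S` has exactly `k` elements unless it contains all reachable vertices of `dom`. -/
def IsKNear (d : V → ℝ≥0∞) (tie : V → ℕ × ℕ) (dom : Finset V) (k : ℕ) (v : V)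
    (S : Finset V) : Prop :=
  S ⊆ dom ∧ v ∉ S ∧ S.card ≤ k ∧ (∀ y ∈ S, d y < ⊤) ∧
  (∀ y ∈ S, ∀ z ∈ dom, z ∉ S → z ≠ v → d z < ⊤ → keyLt d tie y z) ∧
  (∀ z ∈ dom, z ≠ v → d z < ⊤ → z ∉ S → S.card = k)

/-!
Cut the canonical `(√n·k)`-limited shortest `v'`–`u'` path at the internal sampled vertices
that event 𝒜 provides, recursively: subpaths of a canonical path are canonical, so 𝒜 applies
again to each piece until every piece has fewer than `√n` hops and is a single skeleton edge.
The resulting skeleton path visits only sampled vertices of the canonical path, and each of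
them is at least as close to `v'` as `u'`, with strictly fewer hops on ties, hence lies among
the `k` nearest ones. So the skeleton path has at most `k` edges, and its weight is squeezed
between `d^{(√n·k)}(v',u')` and the weight of the canonical path.
-/

lemma last_append (u : V) (p q : List V) : last u (p ++ q) = last (last u p) q := by
  induction p generalizing u <;> simp [last, *]

lemma last_append_singleton (u x : V) (p : List V) : last u (p ++ [x]) = x := by
  rw [last_append]; rfl

lemma last_mem_of_ne_nil (u : V) {p : List V} (hp : p ≠ []) : last u p ∈ p := by
  induction p generalizing u with
  | nil => exact absurd rfl hp
  | cons x xs ih =>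
    rcases eq_or_ne xs [] with rfl | hxs
    · simp [last]
    · exact List.mem_cons_of_mem x (ih x hxs)

lemma cost_append (w : V → V → ℝ≥0∞) (u : V) (p q : List V) :
    cost w u (p ++ q) = cost w u p + cost w (last u p) q := by
  induction p generalizing u with
  | nil => simp [cost, last]
  | cons x xs ih => simp [cost, last, ih, add_assoc]

lemma exists_append_last_eq_of_mem (u : V) {x : V} {q : List V} (hx : x ∈ q) :
    ∃ q₁ q₂, q = q₁ ++ q₂ ∧ q₁ ≠ [] ∧ last u q₁ = x := by
  obtain ⟨s, t, rfl⟩ := List.append_of_mem hx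
  exact ⟨s ++ [x], t, by simp, by simp, last_append_singleton u x s⟩

lemma exists_append_last_eq_of_mem_dropLast (u : V) {x : V} {q : List V}
    (hx : x ∈ q.dropLast) :
    ∃ q₁ q₂, q = q₁ ++ q₂ ∧ q₁ ≠ [] ∧ q₂ ≠ [] ∧ last u q₁ = x := by
  have hq : q ≠ [] := by rintro rfl; simp at hx
  obtain ⟨q₁, q₂, hsplit, hq₁, hlast⟩ := exists_append_last_eq_of_mem u hx
  refine ⟨q₁, q₂ ++ [q.getLast hq], ?_, hq₁, by simp, hlast⟩
  rw [← List.append_assoc, ← hsplit, List.dropLast_append_getLast]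

lemma exists_cycle_of_not_nodup : ∀ {u : V} {p : List V}, ¬(u :: p).Nodup →
    ∃ A B D, p = A ++ B ++ D ∧ B ≠ [] ∧ last (last u A) B = last u A
  | _, [], h => absurd (List.nodup_singleton _) h
  | u, x :: p, h => by
    rw [List.nodup_cons, not_and_or, not_not] at h
    rcases h with hu | hdup
    · obtain ⟨B, D, hBD, hB, hlast⟩ := exists_append_last_eq_of_mem u hu
      exact ⟨[], B, D, hBD, hB, hlast⟩
    · obtain ⟨A, B, D, rfl, hB, hlast⟩ := exists_cycle_of_not_nodup hdup
      exact ⟨x :: A, B, D, rfl, hB, hlast⟩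

lemma last_append_cycle {u : V} {A B : List V} (hcyc : last (last u A) B = last u A)
    (D : List V) : last u (A ++ B ++ D) = last u (A ++ D) := by
  simp only [last_append, hcyc]

lemma cost_le_cost_append_cycle (w : V → V → ℝ≥0∞) {u : V} {A B : List V}
    (hcyc : last (last u A) B = last u A) (D : List V) :
    cost w u (A ++ D) ≤ cost w u (A ++ B ++ D) := by
  simp only [cost_append, last_append, hcyc]
  gcongr
  exact le_self_add

lemma hdist_le_cost (w : V → V → ℝ≥0∞) {h : ℕ} {u v : V} {p : List V}
    (hl : p.length ≤ h) (he : last u p = v) : hdist w h u v ≤ cost w u p :=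
  iInf₂_le p ⟨hl, he⟩

lemma hdist_anti (w : V → V → ℝ≥0∞) {h h' : ℕ} (hh : h ≤ h') (u v : V) :
    hdist w h' u v ≤ hdist w h u v :=
  le_iInf₂ fun _ hp => hdist_le_cost w (hp.1.trans hh) hp.2

lemma hdist_add_le (w : V → V → ℝ≥0∞) (h₁ h₂ : ℕ) (a x c : V) :
    hdist w (h₁ + h₂) a c ≤ hdist w h₁ a x + hdist w h₂ x c := by
  conv_rhs => rw [hdist, hdist]
  simp only [ENNReal.iInf_add, ENNReal.add_iInf]
  refine le_iInf₂ fun q ⟨hql, hqc⟩ => le_iInf₂ fun p ⟨hpl, hpx⟩ => ?_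
  subst hpx hqc
  rw [← cost_append, ← last_append]
  exact hdist_le_cost w (by rw [List.length_append]; omega) rfl

lemma hdist_mul_length_le_cost {w w' : V → V → ℝ≥0∞} {s : ℕ}
    (hw' : ∀ x y, hdist w s x y ≤ w' x y) (u : V) (p : List V) :
    hdist w (s * p.length) u (last u p) ≤ cost w' u p := by
  induction p generalizing u with
  | nil => exact (hdist_le_cost w (p := []) (Nat.zero_le _) rfl).trans (by simp [cost])
  | cons x xs ih =>
    rw [List.length_cons, Nat.mul_succ, add_comm]
    exact (hdist_add_le w s _ u x _).trans (add_le_add (hw' u x) (ih x))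

lemma hdist_le_skelW [DecidableEq V] (w : V → V → ℝ≥0∞) (V' : Finset V) (s : ℕ)
    (x y : V) : hdist w s x y ≤ skelW w V' s x y := by
  unfold skelW
  split_ifs <;> simp

lemma cost_eq_hdist_of_append {w : V → V → ℝ≥0∞} {ℓ : ℕ} {a b : V}
    {q₁ q₂ : List V} (hlen : (q₁ ++ q₂).length ≤ ℓ) (hlast : last a (q₁ ++ q₂) = b)
    (hcost : cost w a (q₁ ++ q₂) = hdist w ℓ a b) (hfin : hdist w ℓ a b < ⊤) :
    cost w a q₁ = hdist w q₁.length a (last a q₁) ∧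
      cost w (last a q₁) q₂ = hdist w q₂.length (last a q₁) b := by
  rw [List.length_append] at hlen
  rw [last_append] at hlast
  rw [cost_append] at hcost
  have hfin' : cost w a q₁ + cost w (last a q₁) q₂ ≠ ⊤ := hcost ▸ hfin.ne
  obtain ⟨hfin₁, hfin₂⟩ := ENNReal.add_ne_top.1 hfin'
  constructor
  · refine le_antisymm (le_iInf₂ fun r ⟨hrlen, hrlast⟩ => ?_) (hdist_le_cost w le_rfl rfl)
    have := hdist_le_cost w (h := ℓ) (u := a) (v := b) (p := r ++ q₂)
      (by rw [List.length_append]; omega) (by rw [last_append, hrlast, hlast])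
    rw [cost_append, hrlast, ← hcost] at this
    exact (ENNReal.add_le_add_iff_right hfin₂).1 this
  · refine le_antisymm (le_iInf₂ fun r ⟨hrlen, hrlast⟩ => ?_) (hdist_le_cost w le_rfl hlast)
    have := hdist_le_cost w (h := ℓ) (u := a) (v := b) (p := q₁ ++ r)
      (by rw [List.length_append]; omega) (by rw [last_append, hrlast])
    rw [cost_append, ← hcost] at this
    exact (ENNReal.add_le_add_iff_left hfin₁).1 this

lemma lex_append_of_length_eq {α : Type*} {r : α → α → Prop} {l₁ l₂ : List α}
    (h : List.Lex r l₁ l₂) (hlen : l₁.length = l₂.length) (t : List α) :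
    List.Lex r (l₁ ++ t) (l₂ ++ t) := by
  induction h with
  | nil => simp at hlen
  | cons _ ih => exact List.Lex.cons (ih (by simpa using hlen))
  | rel h => exact List.Lex.rel h

namespace CanonicalPath

variable {w : V → V → ℝ≥0∞} {ids : V → ℕ} {i : ℕ} {u v : V} {p : List V}

lemma unique (hids : Function.Injective ids) {q : List V} (hp : CanonicalPath w ids i u v p)
    (hq : CanonicalPath w ids i u v q) : p = q := by
  have hpq := hp.2.2.2 q hq.1 hq.2.1 hq.2.2.1
  have hqp := hq.2.2.2 p hp.1 hp.2.1 hp.2.2.1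
  have hlen := le_antisymm hpq.1 hqp.1
  have hids' : (u :: p).map ids = (u :: q).map ids :=
    le_antisymm (not_lt.1 (hpq.2 hlen)) (not_lt.1 (hqp.2 hlen.symm))
  exact List.cons_injective (List.map_injective_iff.2 hids hids')

lemma nodup (hp : CanonicalPath w ids i u v p) : (u :: p).Nodup := by
  by_contra hdup
  obtain ⟨A, B, D, rfl, hB, hcyc⟩ := exists_cycle_of_not_nodup hdup
  obtain ⟨hl, hlast, hcost, hmin⟩ := hp
  have hshorter : (A ++ D).length < (A ++ B ++ D).length := by
    simp only [List.length_append]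
    have := List.length_pos_iff.2 hB
    omega
  have hlast' : last u (A ++ D) = v := (last_append_cycle hcyc D).symm.trans hlast
  have hcost' : cost w u (A ++ D) = hdist w i u v :=
    le_antisymm ((cost_le_cost_append_cycle w hcyc D).trans hcost.le)
      (hdist_le_cost w (hshorter.le.trans hl) hlast')
  have := (hmin _ (hshorter.le.trans hl) hlast' hcost').1
  omega

lemma minHops_eq (hp : CanonicalPath w ids i u v p) : minHops w i u v = p.length := by
  refine le_antisymm (Nat.sInf_le ⟨p, rfl, hp.1, hp.2.1, hp.2.2.1⟩) ?_
  refine le_csInf ⟨p.length, p, rfl, hp.1, hp.2.1, hp.2.2.1⟩ ?_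
  rintro _ ⟨r, rfl, hr⟩
  exact (hp.2.2.2 r hr.1 hr.2.1 hr.2.2).1

variable {q₁ q₂ : List V}

lemma of_append_left (hq : CanonicalPath w ids i u v (q₁ ++ q₂)) (hfin : hdist w i u v < ⊤) :
    CanonicalPath w ids q₁.length u (last u q₁) q₁ := by
  obtain ⟨hlen, hlast, hcost, hmin⟩ := hq
  have hc₁ := (cost_eq_hdist_of_append hlen hlast hcost hfin).1
  refine ⟨le_rfl, rfl, hc₁, fun r hr hrx hrc => ?_⟩
  have hr₂ := hmin (r ++ q₂) (by simp only [List.length_append] at hlen ⊢; omega)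
    (by rw [last_append, hrx, ← last_append, hlast])
    (by rw [cost_append, hrx, hrc, ← hc₁, ← cost_append, hcost])
  simp only [List.length_append] at hr₂
  refine ⟨by omega, fun heq hlex => hr₂.2 (by omega) ?_⟩
  simpa using lex_append_of_length_eq hlex (by simp [heq]) (q₂.map ids)

lemma of_append_right (hq : CanonicalPath w ids i u v (q₁ ++ q₂)) (hfin : hdist w i u v < ⊤) :
    CanonicalPath w ids q₂.length (last u q₁) v q₂ := by
  obtain ⟨hlen, hlast, hcost, hmin⟩ := hq
  have hc₂ := (cost_eq_hdist_of_append hlen hlast hcost hfin).2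
  rw [last_append] at hlast
  refine ⟨le_rfl, hlast, hc₂, fun r hr hrv hrc => ?_⟩
  have hr₁ := hmin (q₁ ++ r) (by simp only [List.length_append] at hlen ⊢; omega)
    (by rw [last_append, hrv]) (by rw [cost_append, hrc, ← hc₂, ← cost_append, hcost])
  simp only [List.length_append] at hr₁
  refine ⟨by omega, fun heq hlex => hr₁.2 (by omega) ?_⟩
  rw [List.map_cons, List.map_cons, List.lex_cons_iff] at hlex
  simpa using List.Lex.append_left _ hlex ((u :: q₁).map ids)

end CanonicalPath

lemma exists_skeleton_sublist [DecidableEq V] {w : V → V → ℝ≥0∞} {ids : V → ℕ}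
    {V' : Finset V} {s : ℕ}
    (hA : ∀ ℓ a b q, hdist w ℓ a b < ⊤ → CanonicalPath w ids ℓ a b q →
      s ≤ q.length → ∃ x ∈ q.dropLast, x ∈ V')
    {ℓ : ℕ} {a b : V} {q : List V} (hq : CanonicalPath w ids ℓ a b q)
    (hfin : hdist w ℓ a b < ⊤) (ha : a ∈ V') (hb : b ∈ V') :
    ∃ p : List V, p.Sublist q ∧ (∀ x ∈ p, x ∈ V') ∧ last a p = b ∧
      cost (skelW w V' s) a p ≤ hdist w ℓ a b := by
  induction hm : q.length using Nat.strong_induction_on generalizing ℓ a b q with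
  | _ m IH =>
  rcases eq_or_ne q [] with rfl | hne
  · exact ⟨[], List.nil_sublist _, by simp, hq.2.1, by simp [cost]⟩
  by_cases hshort : q.length < s
  · refine ⟨[b], List.singleton_sublist.2 (hq.2.1 ▸ last_mem_of_ne_nil a hne),
      by simpa using hb, rfl, ?_⟩
    calc cost (skelW w V' s) a [b] = hdist w s a b := by simp [cost, skelW, ha, hb]
      _ ≤ cost w a q := hdist_le_cost w hshort.le hq.2.1
      _ = hdist w ℓ a b := hq.2.2.1
  obtain ⟨x, hx, hxV⟩ := hA ℓ a b q hfin hq (not_lt.1 hshort)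
  obtain ⟨q₁, q₂, rfl, hq₁, hq₂, rfl⟩ := exists_append_last_eq_of_mem_dropLast a hx
  obtain ⟨hc₁, hc₂⟩ := cost_eq_hdist_of_append hq.1 hq.2.1 hq.2.2.1 hfin
  have hfin' : cost w a q₁ + cost w (last a q₁) q₂ < ⊤ := by
    rw [← cost_append, hq.2.2.1]; exact hfin
  have hfin₁ : hdist w q₁.length a (last a q₁) < ⊤ := hc₁ ▸ (le_self_add.trans_lt hfin')
  have hfin₂ : hdist w q₂.length (last a q₁) b < ⊤ := hc₂ ▸ (le_add_self.trans_lt hfin')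
  have hlen₁ : q₁.length < m := by simpa [← hm] using List.length_pos_iff.2 hq₂
  have hlen₂ : q₂.length < m := by simpa [← hm] using List.length_pos_iff.2 hq₁
  obtain ⟨p₁, hsub₁, hV₁, hlast₁, hcost₁⟩ :=
    IH _ hlen₁ (hq.of_append_left hfin) hfin₁ ha hxV rfl
  obtain ⟨p₂, hsub₂, hV₂, hlast₂, hcost₂⟩ :=
    IH _ hlen₂ (hq.of_append_right hfin) hfin₂ hxV hb rfl
  refine ⟨p₁ ++ p₂, hsub₁.append hsub₂,
    fun y hy => (List.mem_append.1 hy).elim (hV₁ y) (hV₂ y),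
    by rw [last_append, hlast₁, hlast₂], ?_⟩
  calc cost (skelW w V' s) a (p₁ ++ p₂)
      = cost (skelW w V' s) a p₁ + cost (skelW w V' s) (last a q₁) p₂ := by
        rw [cost_append, hlast₁]
    _ ≤ cost w a q₁ + cost w (last a q₁) q₂ := by
        rw [hc₁, hc₂]; exact add_le_add hcost₁ hcost₂
    _ = hdist w ℓ a b := by rw [← cost_append, hq.2.2.1]

/-- The prefix of the canonical path ending at a vertex is at most as heavy as the whole path
and, on a tie, strictly shorter; so the vertex precedes `u` in the order defining `S`. -/
lemma mem_of_mem_canonicalPath {w : V → V → ℝ≥0∞} {ids : V → ℕ} {V' : Finset V}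
    {i k : ℕ} {v u x : V} {S : Finset V} {q : List V}
    (hS : IsKNear (hdist w i v) (fun y => (minHops w i v y, ids y)) V' k v S) (hu : u ∈ S)
    (hq : CanonicalPath w ids i v u q) (hx : x ∈ q) (hxV : x ∈ V') : x ∈ S := by
  obtain ⟨-, -, -, hfinS, hnear, -⟩ := hS
  obtain ⟨q₁, q₂, rfl, -, rfl⟩ := exists_append_last_eq_of_mem v hx
  rcases eq_or_ne q₂ [] with rfl | hq₂
  · simpa [← hq.2.1] using hu
  by_contra hxS
  have hxv : last v q₁ ≠ v := fun h => (List.nodup_cons.1 hq.nodup).1 (h ▸ hx)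
  have hshorter : q₁.length < (q₁ ++ q₂).length := by
    simpa using List.length_pos_iff.2 hq₂
  have hdx : hdist w i v (last v q₁) ≤ cost w v q₁ :=
    hdist_le_cost w (hshorter.le.trans hq.1) rfl
  have hpre : cost w v q₁ ≤ hdist w i v u := by
    rw [← hq.2.2.1, cost_append]; exact le_self_add
  have hkey : keyLt (hdist w i v) (fun y => (minHops w i v y, ids y)) (last v q₁) u := by
    rcases (hdx.trans hpre).lt_or_eq with hlt | heq
    · exact Prod.Lex.left _ _ hlt
    · have hhops : minHops w i v (last v q₁) < minHops w i v u := by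
        rw [hq.minHops_eq]
        have hq₁ : cost w v q₁ = hdist w i v (last v q₁) := le_antisymm (heq ▸ hpre) hdx
        exact lt_of_le_of_lt
          (Nat.sInf_le ⟨q₁, rfl, hshorter.le.trans hq.1, rfl, hq₁⟩) hshorter
      rw [keyLt, heq]
      exact Prod.Lex.right _ (Prod.Lex.left _ _ hhops)
  have hkey' := hnear u hu _ hxV hxS hxv (hdx.trans_lt (hpre.trans_lt (hfinS u hu)))
  unfold keyLt at hkey hkey'
  exact asymm hkey hkey'

theorem skeleton_path_exists_general [Fintype V] [DecidableEq V]
    (w : V → V → ℝ≥0∞)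
    (n : ℕ)
    (ids : V → ℕ) (hids : Function.Injective ids)
    (P : ℕ → V → V → List V)
    (hP : ∀ i u v, hdist w i u v < ⊤ → CanonicalPath w ids i u v (P i u v))
    (V' : Finset V)
    (hA : ∀ i u v, hdist w i u v < ⊤ → Nat.sqrt n ≤ (P i u v).length →
      ∃ x ∈ (P i u v).dropLast, x ∈ V')
    (k : ℕ)
    (v' : V) (hv' : v' ∈ V')
    (S : Finset V)
    (hS : IsKNear (hdist w (Nat.sqrt n * k) v')
      (fun x => (minHops w (Nat.sqrt n * k) v' x, ids x)) V' k v' S)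
    (u' : V) (hu' : u' ∈ S) :
    ∃ p : List V, p.length ≤ k ∧ last v' p = u' ∧
      cost (skelW w V' (Nat.sqrt n)) v' p = hdist w (Nat.sqrt n * k) v' u' := by
  have hA' : ∀ ℓ a b q, hdist w ℓ a b < ⊤ → CanonicalPath w ids ℓ a b q →
      Nat.sqrt n ≤ q.length → ∃ x ∈ q.dropLast, x ∈ V' := by
    intro ℓ a b q hfin hq
    rw [← (hP ℓ a b hfin).unique hids hq]
    exact hA ℓ a b hfin
  have hfin := hS.2.2.2.1 u' hu'
  have hq := hP _ _ _ hfin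
  obtain ⟨p, hsub, hpV, hlast, hcost⟩ :=
    exists_skeleton_sublist hA' hq hfin hv' (hS.1 hu')
  have hpS : p.toFinset ⊆ S := fun x hx =>
    mem_of_mem_canonicalPath hS hu' hq (hsub.subset (List.mem_toFinset.1 hx))
      (hpV x (List.mem_toFinset.1 hx))
  have hlen : p.length ≤ k := by
    rw [← List.toFinset_card_of_nodup (hq.nodup.of_cons.sublist hsub)]
    exact (Finset.card_le_card hpS).trans hS.2.2.1
  refine ⟨p, hlen, hlast, le_antisymm hcost ?_⟩
  calc hdist w (Nat.sqrt n * k) v' u'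
      ≤ hdist w (Nat.sqrt n * p.length) v' (last v' p) :=
        hlast ▸ hdist_anti w (Nat.mul_le_mul_left _ hlen) _ _
    _ ≤ cost (skelW w V' (Nat.sqrt n)) v' p :=
        hdist_mul_length_le_cost (hdist_le_skelW w V' _) v' p

/-- Under event 𝒜 (every canonical hop-limited shortest path with at least `√n` hops
has an internal sampled vertex), for every sampled `v'` and every `u'` among the `k`
closest sampled vertices to `v'` under `(√n·k)`-limited distance in `G`, there is a
`v'`–`u'` path in the skeleton graph with at most `k` edges and weight exactly
`d_G^{(√n·k)}(v',u')`. -/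
theorem skeleton_path_exists [Fintype V] [DecidableEq V]
    (w : V → V → ℝ≥0∞) (hsymm : ∀ u v, w u v = w v u)
    (n : ℕ) (hn : n = Fintype.card V)
    (ids : V → ℕ) (hids : Function.Injective ids)
    (P : ℕ → V → V → List V)
    (hP : ∀ i u v, hdist w i u v < ⊤ → CanonicalPath w ids i u v (P i u v))
    (V' : Finset V)
    (hA : ∀ i u v, hdist w i u v < ⊤ → Nat.sqrt n ≤ (P i u v).length →
      ∃ x ∈ (P i u v).dropLast, x ∈ V')
    (k : ℕ) (hk : 1 ≤ k)
    (v' : V) (hv' : v' ∈ V')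
    (S : Finset V)
    (hS : IsKNear (hdist w (Nat.sqrt n * k) v')
      (fun x => (minHops w (Nat.sqrt n * k) v' x, ids x)) V' k v' S)
    (u' : V) (hu' : u' ∈ S) :
    ∃ p : List V, p.length ≤ k ∧ last v' p = u' ∧
      cost (skelW w V' (Nat.sqrt n)) v' p = hdist w (Nat.sqrt n * k) v' u' :=
  skeleton_path_exists_general w n ids hids P hP V' hA k v' hv' S hS u' hu'

end Stmt6
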